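/- arXiv:1811.11628 — 5 statements merged into one kernel-verified Lean document; each statement's English description precedes it below -/
import Mathlib

section
/- A left rigid monoidal category admits a pivotal structure (a monoidal natural isomorphism from the identity functor to the double dual functor) if and only if it is sovereign, i.e. it is also right rigid and the left and right dual functors are equal as monoidal functors. -/
open CategoryTheory MonoidalCategory

namespace SovereignPaper

attribute [-instance] CategoryTheory.hasRightDualUnit
attribute [-instance] CategoryTheory.hasLeftDualUnit

variable {C : Type*} [Category C] [MonoidalCategory C] [RightRigidCategory C]

/-- The canonical coevaluation exhibiting `Yᘁ ⊗ Xᘁ` as a dual of `X ⊗ Y`. -/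
noncomputable def coevTensor (X Y : C) : 𝟙_ C ⟶ (X ⊗ Y) ⊗ (Yᘁ ⊗ Xᘁ) :=
  η_ X Xᘁ ≫ X ◁ ((λ_ (Xᘁ)).inv ≫ η_ Y Yᘁ ▷ Xᘁ ≫ (α_ Y (Yᘁ) (Xᘁ)).hom) ≫
    (α_ X Y (Yᘁ ⊗ Xᘁ)).inv

/-- The canonical evaluation exhibiting `Yᘁ ⊗ Xᘁ` as a dual of `X ⊗ Y`. -/
noncomputable def evTensor (X Y : C) : (Yᘁ ⊗ Xᘁ) ⊗ (X ⊗ Y) ⟶ 𝟙_ C :=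
  (α_ (Yᘁ) (Xᘁ) (X ⊗ Y)).hom ≫
    Yᘁ ◁ ((α_ (Xᘁ) X Y).inv ≫ ε_ X Xᘁ ▷ Y ≫ (λ_ Y).hom) ≫ ε_ Y Yᘁ

/-- The canonical comparison `(X ⊗ Y)ᘁ ⟶ Yᘁ ⊗ Xᘁ`: the monoidal structure morphism
of the (paper-)left dual functor. -/
noncomputable def lamL (X Y : C) : (X ⊗ Y)ᘁ ⟶ Yᘁ ⊗ Xᘁ :=
  (ρ_ ((X ⊗ Y)ᘁ)).inv ≫ ((X ⊗ Y)ᘁ ◁ coevTensor X Y) ≫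
    (α_ ((X ⊗ Y)ᘁ) (X ⊗ Y) (Yᘁ ⊗ Xᘁ)).inv ≫
      ε_ (X ⊗ Y) ((X ⊗ Y)ᘁ) ▷ (Yᘁ ⊗ Xᘁ) ≫ (λ_ (Yᘁ ⊗ Xᘁ)).hom

/-- The canonical comparison `Yᘁ ⊗ Xᘁ ⟶ (X ⊗ Y)ᘁ`, inverse to `lamL`. -/
noncomputable def lamInvL (X Y : C) : Yᘁ ⊗ Xᘁ ⟶ (X ⊗ Y)ᘁ :=
  (ρ_ (Yᘁ ⊗ Xᘁ)).inv ≫ ((Yᘁ ⊗ Xᘁ) ◁ η_ (X ⊗ Y) ((X ⊗ Y)ᘁ)) ≫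
    (α_ (Yᘁ ⊗ Xᘁ) (X ⊗ Y) ((X ⊗ Y)ᘁ)).inv ≫
      evTensor X Y ▷ ((X ⊗ Y)ᘁ) ≫ (λ_ ((X ⊗ Y)ᘁ)).hom

/-- The canonical unit comparison `𝟙_ C ⟶ (𝟙_ C)ᘁ` of the left dual functor. -/
noncomputable def unitL : (𝟙_ C) ⟶ (𝟙_ C)ᘁ :=
  η_ (𝟙_ C) ((𝟙_ C)ᘁ) ≫ (λ_ ((𝟙_ C)ᘁ)).hom

variable (C) in
/-- A sovereign structure on a (paper-)left rigid category `C`: a (paper-)right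
duality carried by the *same* dual objects `Xᘁ` such that the resulting right dual
functor coincides with the left dual functor as a strong monoidal functor (same
object map, same action on morphisms, same monoidal and unit constraints). -/
structure SovereignStruct where
  ev' : ∀ X : C, X ⊗ Xᘁ ⟶ 𝟙_ C
  coev' : ∀ X : C, 𝟙_ C ⟶ Xᘁ ⊗ X
  zigzag₁ : ∀ X : C,
    X ◁ coev' X ≫ (α_ X (Xᘁ) X).inv ≫ ev' X ▷ X = (ρ_ X).hom ≫ (λ_ X).inv
  zigzag₂ : ∀ X : C,
    coev' X ▷ (Xᘁ) ≫ (α_ (Xᘁ) X (Xᘁ)).hom ≫ Xᘁ ◁ ev' X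
      = (λ_ (Xᘁ)).hom ≫ (ρ_ (Xᘁ)).inv
  mate_eq : ∀ {X Y : C} (f : X ⟶ Y),
    (λ_ (Yᘁ)).inv ≫ coev' X ▷ (Yᘁ) ≫ (α_ (Xᘁ) X (Yᘁ)).hom ≫
        Xᘁ ◁ (f ▷ (Yᘁ)) ≫ Xᘁ ◁ ev' Y ≫ (ρ_ (Xᘁ)).hom = fᘁ
  mon_eq : ∀ X Y : C,
    lamL X Y
      = (λ_ ((X ⊗ Y)ᘁ)).inv ≫
          ((coev' Y ≫
              Yᘁ ◁ ((λ_ Y).inv ≫ coev' X ▷ Y ≫ (α_ (Xᘁ) X Y).hom) ≫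
                (α_ (Yᘁ) (Xᘁ) (X ⊗ Y)).inv) ▷ ((X ⊗ Y)ᘁ)) ≫
            (α_ (Yᘁ ⊗ Xᘁ) (X ⊗ Y) ((X ⊗ Y)ᘁ)).hom ≫
              ((Yᘁ ⊗ Xᘁ) ◁ ev' (X ⊗ Y)) ≫ (ρ_ (Yᘁ ⊗ Xᘁ)).hom
  unit_eq : unitL (C := C) = coev' (𝟙_ C) ≫ (ρ_ ((𝟙_ C)ᘁ)).hom

variable (C) in
/-- A pivotal structure on a (paper-)left rigid category: a monoidal natural
isomorphism from the identity functor to the double dual functor. -/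
structure PivotalStruct where
  i : ∀ X : C, X ≅ (Xᘁ)ᘁ
  naturality : ∀ {X Y : C} (f : X ⟶ Y), f ≫ (i Y).hom = (i X).hom ≫ rightAdjointMate (C := C) (rightAdjointMate (C := C) f)
  monoidal : ∀ X Y : C,
    (i (X ⊗ Y)).hom
      = ((i X).hom ⊗ₘ (i Y).hom) ≫ lamInvL (Yᘁ) (Xᘁ) ≫ (lamL X Y)ᘁ
  unit : (i (𝟙_ C)).hom ≫ (unitL (C := C))ᘁ = unitL (C := C)

/-!
A sovereign structure is a second duality exhibiting each `X` as a right dual of `Xᘁ`. By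
uniqueness of duals it determines an isomorphism `X ≅ Xᘁᘁ` (`doubleDualIso`), and every family of
isomorphisms `X ≅ Xᘁᘁ` arises in this way, by transporting the chosen duality along it. The
sovereign axioms say that certain left adjoint mates taken with the second duality (of `f`, of
`𝟙 (X ⊗ Y)` and of `𝟙 (𝟙_ C)`) are `fᘁ` and the tensor and unit constraints of the dual functor.
Right adjoint mates invert left adjoint mates, and taking right adjoint mates turns these three
equations into naturality, monoidality and the unit axiom of `doubleDualIso`.
-/

section ExactPairings

omit [RightRigidCategory C]

-- `⟨B⟩ : HasRightDual A` packages the pairing `ExactPairing A B` in context, so that adjoint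
-- mates can be taken with respect to any pairings, not only the chosen duals.
variable {A A' B B' D D' : C}

theorem ExactPairing.coevaluation_comp_whiskerLeft_injective [ExactPairing A B] {Z : C} :
    Function.Injective fun h : B ⟶ Z => η_ A B ≫ A ◁ h := fun h h' e => by
  simpa using congrArg (tensorLeftHomEquiv (𝟙_ C) A B Z).symm e

theorem ExactPairing.coevaluation_comp_whiskerRight_injective [ExactPairing A B] {Z : C} :
    Function.Injective fun g : A ⟶ Z => η_ A B ≫ g ▷ B := fun g g' e => by
  simpa using congrArg (tensorRightHomEquiv (𝟙_ C) A B Z).symm e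

theorem rightAdjointMate_eq_iff (p : ExactPairing A B) (p' : ExactPairing A' B')
    (g : A ⟶ A') (f : B' ⟶ B) :
    @rightAdjointMate C _ _ A A' ⟨B⟩ ⟨B'⟩ g = f ↔ η_ A B ≫ g ▷ B = η_ A' B' ≫ A' ◁ f := by
  have h : η_ A' B' ≫ A' ◁ @rightAdjointMate C _ _ A A' ⟨B⟩ ⟨B'⟩ g = η_ A B ≫ g ▷ B :=
    @coevaluation_comp_rightAdjointMate C _ _ A A' ⟨B⟩ ⟨B'⟩ g
  rw [← h]
  exact ExactPairing.coevaluation_comp_whiskerLeft_injective.eq_iff.symm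

theorem leftAdjointMate_eq_iff (p : ExactPairing A B) (p' : ExactPairing A' B')
    (g : A ⟶ A') (f : B' ⟶ B) :
    @leftAdjointMate C _ _ B' B ⟨A'⟩ ⟨A⟩ f = g ↔ η_ A B ≫ g ▷ B = η_ A' B' ≫ A' ◁ f := by
  have h : η_ A B ≫ @leftAdjointMate C _ _ B' B ⟨A'⟩ ⟨A⟩ f ▷ B = η_ A' B' ≫ A' ◁ f :=
    @coevaluation_comp_leftAdjointMate C _ _ B' B ⟨A'⟩ ⟨A⟩ f
  rw [← h, eq_comm]
  exact ExactPairing.coevaluation_comp_whiskerRight_injective.eq_iff.symm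

theorem rightAdjointMate_eq_iff_eq_leftAdjointMate (p : ExactPairing A B)
    (p' : ExactPairing A' B') (g : A ⟶ A') (f : B' ⟶ B) :
    @rightAdjointMate C _ _ A A' ⟨B⟩ ⟨B'⟩ g = f ↔ g = @leftAdjointMate C _ _ B' B ⟨A'⟩ ⟨A⟩ f := by
  rw [rightAdjointMate_eq_iff, eq_comm (a := g), leftAdjointMate_eq_iff]

theorem rightDualIso_hom_eq_iff (p : ExactPairing A B) (q : ExactPairing A D) (h : B ⟶ D) :
    (rightDualIso p q).hom = h ↔ η_ A D = η_ A B ≫ A ◁ h := by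
  rw [rightDualIso, rightAdjointMate_eq_iff, id_whiskerRight, Category.comp_id]

theorem rightAdjointMate_comp_rightDualIso_hom (p : ExactPairing A B) (q : ExactPairing A D)
    (p' : ExactPairing A' B') (g : A ⟶ A') :
    @rightAdjointMate C _ _ A A' ⟨B⟩ ⟨B'⟩ g ≫ (rightDualIso p q).hom
      = @rightAdjointMate C _ _ A A' ⟨D⟩ ⟨B'⟩ g := by
  rw [rightDualIso, ← @comp_rightAdjointMate C _ _ A A A' ⟨D⟩ ⟨B⟩ ⟨B'⟩, Category.id_comp]

theorem rightDualIso_hom_comp_rightAdjointMate (p' : ExactPairing A' B')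
    (q' : ExactPairing A' D') (q : ExactPairing A D) (g : A ⟶ A') :
    (rightDualIso p' q').hom ≫ @rightAdjointMate C _ _ A A' ⟨D⟩ ⟨D'⟩ g
      = @rightAdjointMate C _ _ A A' ⟨D⟩ ⟨B'⟩ g := by
  rw [rightDualIso, ← @comp_rightAdjointMate C _ _ A A' A' ⟨D⟩ ⟨D'⟩ ⟨B'⟩, Category.comp_id]

theorem rightAdjointMate_eq_rightDualIso_hom_iff (p₁ : ExactPairing A B)
    (p₂ : ExactPairing A' B) (r : ExactPairing A D) (g : A ⟶ A') :
    @rightAdjointMate C _ _ A A' ⟨D⟩ ⟨B⟩ g = (rightDualIso p₁ r).hom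
      ↔ g = (leftDualIso p₁ p₂).hom := by
  rw [← rightAdjointMate_comp_rightDualIso_hom p₁ r p₂ g, cancel_mono_id]
  exact rightAdjointMate_eq_iff_eq_leftAdjointMate p₁ p₂ g (𝟙 B)

theorem rightDualIso_exactPairingCongrRight (q : ExactPairing A B') (i : B ≅ B') :
    rightDualIso (exactPairingCongrRight i) q = i := by
  ext
  rw [rightDualIso_hom_eq_iff]
  change η_ A B' = (η_ A B' ≫ A ◁ i.inv) ≫ A ◁ i.hom
  simp

theorem rightDualIso_tensor {B₁ B₂ B₁' B₂' : C} (p₁ : ExactPairing A B₁)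
    (p₂ : ExactPairing A B₂) (q₁ : ExactPairing A' B₁') (q₂ : ExactPairing A' B₂') :
    (rightDualIso (ExactPairing.tensor (X₁ := A) (X₂ := A') (Y₁ := B₁) (Y₂ := B₁'))
        (ExactPairing.tensor (X₁ := A) (X₂ := A') (Y₁ := B₂) (Y₂ := B₂'))).hom
      = (rightDualIso q₁ q₂).hom ⊗ₘ (rightDualIso p₁ p₂).hom := by
  have hp := (rightDualIso_hom_eq_iff p₁ p₂ _).1 rfl
  have hq := (rightDualIso_hom_eq_iff q₁ q₂ _).1 rfl
  set f := (rightDualIso p₁ p₂).hom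
  set g := (rightDualIso q₁ q₂).hom
  rw [rightDualIso_hom_eq_iff, ExactPairing.tensor_coevaluation,
    ExactPairing.tensor_coevaluation, tensorHom_def']
  calc
    _ = (η_ A B₁ ≫ A ◁ f) ⊗≫ (A ◁ (η_ A' B₁' ≫ A' ◁ g)) ▷ B₂ ⊗≫ 𝟙 _ := by rw [hp, hq]
    _ = η_ A B₁ ⊗≫ ((A ◁ η_ A' B₁') ▷ B₁ ≫ (A ⊗ A' ⊗ B₁') ◁ f) ⊗≫
          (A ◁ A' ◁ g) ▷ B₂ ⊗≫ 𝟙 _ := by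
      rw [← whisker_exchange]; monoidal
    _ = _ := by monoidal

theorem exactPairingUnit_evaluation : ε_ (𝟙_ C) (𝟙_ C) = (ρ_ (𝟙_ C)).hom := rfl

end ExactPairings

theorem evTensor_eq (X Y : C) : evTensor X Y = ε_ (X ⊗ Y) (Yᘁ ⊗ Xᘁ) := by
  rw [ExactPairing.tensor_evaluation, evTensor]; monoidal

theorem lamInvL_eq (X Y : C) : lamInvL X Y = (rightDualTensorIso X Y).inv := by
  simp only [rightDualTensorIso, rightDualIso, rightAdjointMate, id_whiskerRight,
    MonoidalCategory.whiskerLeft_id, Category.id_comp, lamInvL, evTensor_eq]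

theorem unitL_eq :
    unitL = (rightDualIso exactPairingUnit (HasRightDual.exact (X := 𝟙_ C))).hom := by
  simp only [rightDualIso, rightAdjointMate, id_whiskerRight,
    MonoidalCategory.whiskerLeft_id, Category.id_comp, unitL, exactPairingUnit_evaluation]
  monoidal

variable {X Y : C}

abbrev doubleDualIso (p : ExactPairing Xᘁ X) : X ≅ (Xᘁ)ᘁ := rightDualIso p HasRightDual.exact

theorem doubleDualIso_naturality_iff (p : ExactPairing Xᘁ X) (q : ExactPairing Yᘁ Y)
    (f : X ⟶ Y) :
    f ≫ (doubleDualIso q).hom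
        = (doubleDualIso p).hom ≫ rightAdjointMate (C := C) (rightAdjointMate (C := C) f) ↔
      (λ_ (Yᘁ)).inv ≫ η_ (Xᘁ) X ▷ (Yᘁ) ≫ (α_ (Xᘁ) X (Yᘁ)).hom ≫
        Xᘁ ◁ (f ▷ (Yᘁ)) ≫ Xᘁ ◁ ε_ (Yᘁ) Y ≫ (ρ_ (Xᘁ)).hom = fᘁ := by
  set g := rightAdjointMate (C := C) f
  have key : @rightAdjointMate C _ _ Yᘁ Xᘁ ⟨Y⟩ ⟨X⟩ g ≫ (doubleDualIso q).hom
      = (doubleDualIso p).hom ≫ rightAdjointMate (C := C) g :=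
    (rightAdjointMate_comp_rightDualIso_hom q _ p g).trans
      (rightDualIso_hom_comp_rightAdjointMate p _ _ g).symm
  rw [← key, cancel_mono, eq_comm, rightAdjointMate_eq_iff_eq_leftAdjointMate, eq_comm]
  simp only [leftAdjointMate]
  rw [associator_naturality_middle_assoc]

theorem doubleDualIso_tensor_iff (p : ExactPairing Xᘁ X) (q : ExactPairing Yᘁ Y)
    (r : ExactPairing (X ⊗ Y)ᘁ (X ⊗ Y)) :
    (doubleDualIso r).hom
        = ((doubleDualIso p).hom ⊗ₘ (doubleDualIso q).hom) ≫ lamInvL (Yᘁ) (Xᘁ) ≫ (lamL X Y)ᘁ ↔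
      lamL X Y = (λ_ ((X ⊗ Y)ᘁ)).inv ≫
          ((η_ (Yᘁ) Y ≫ Yᘁ ◁ ((λ_ Y).inv ≫ η_ (Xᘁ) X ▷ Y ≫ (α_ (Xᘁ) X Y).hom) ≫
                (α_ (Yᘁ) (Xᘁ) (X ⊗ Y)).inv) ▷ ((X ⊗ Y)ᘁ)) ≫
            (α_ (Yᘁ ⊗ Xᘁ) (X ⊗ Y) ((X ⊗ Y)ᘁ)).hom ≫
              ((Yᘁ ⊗ Xᘁ) ◁ ε_ ((X ⊗ Y)ᘁ) (X ⊗ Y)) ≫ (ρ_ (Yᘁ ⊗ Xᘁ)).hom := by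
  let t : ExactPairing (Yᘁ ⊗ Xᘁ) (X ⊗ Y) := ExactPairing.tensor
  have hmate : @rightAdjointMate C _ _ _ _ ⟨((X ⊗ Y)ᘁ)ᘁ⟩ ⟨X ⊗ Y⟩ (lamL X Y)
      = ((doubleDualIso p).hom ⊗ₘ (doubleDualIso q).hom) ≫ lamInvL (Yᘁ) (Xᘁ) ≫ (lamL X Y)ᘁ := by
    rw [← rightDualIso_tensor, lamInvL_eq, ← rightDualIso_hom_comp_rightAdjointMate t
      (ExactPairing.tensor (X₁ := Yᘁ) (X₂ := Xᘁ) (Y₁ := (Yᘁ)ᘁ) (Y₂ := (Xᘁ)ᘁ)) HasRightDual.exact]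
    exact congrArg _ (rightDualIso_hom_comp_rightAdjointMate _ _ _ _).symm
  rw [← hmate, eq_comm, rightAdjointMate_eq_rightDualIso_hom_iff r t HasRightDual.exact]
  refine Eq.congr_right ?_
  simp only [leftDualIso, leftAdjointMate, t, ExactPairing.tensor_coevaluation,
    MonoidalCategory.whiskerLeft_id, id_whiskerRight, Category.id_comp]
  monoidal

theorem doubleDualIso_unit_iff (p : ExactPairing (𝟙_ C)ᘁ (𝟙_ C)) :
    (doubleDualIso p).hom ≫ (unitL (C := C))ᘁ = unitL ↔
      unitL = η_ ((𝟙_ C)ᘁ : C) (𝟙_ C) ≫ (ρ_ ((𝟙_ C)ᘁ : C)).hom := by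
  rw [rightDualIso_hom_comp_rightAdjointMate p HasRightDual.exact HasRightDual.exact, unitL_eq,
    rightAdjointMate_eq_rightDualIso_hom_iff exactPairingUnit p, ← unitL_eq]
  refine Eq.congr_right ?_
  simp only [leftDualIso, leftAdjointMate, MonoidalCategory.whiskerLeft_id, id_whiskerRight,
    Category.id_comp, exactPairingUnit_evaluation]
  monoidal

end SovereignPaper

open SovereignPaper in
/-- A (paper-)left rigid monoidal category admits a pivotal
structure iff it is sovereign. -/
theorem pivotal_iff_sovereign (C : Type*) [Category C] [MonoidalCategory C]
    [RightRigidCategory C] :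
    Nonempty (PivotalStruct C) ↔ Nonempty (SovereignStruct C) := by
  constructor
  · rintro ⟨P⟩
    let Q (X : C) : ExactPairing Xᘁ X := exactPairingCongrRight (P.i X)
    have hQ (X : C) : doubleDualIso (Q X) = P.i X := rightDualIso_exactPairingCongrRight _ _
    exact ⟨{
      ev' X := (Q X).evaluation'
      coev' X := (Q X).coevaluation'
      zigzag₁ X := (Q X).coevaluation_evaluation'
      zigzag₂ X := (Q X).evaluation_coevaluation'
      mate_eq f := (doubleDualIso_naturality_iff (Q _) (Q _) f).1
        (by simpa only [hQ] using P.naturality f)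
      mon_eq X Y := (doubleDualIso_tensor_iff (Q X) (Q Y) (Q _)).1
        (by simpa only [hQ] using P.monoidal X Y)
      unit_eq := (doubleDualIso_unit_iff (Q _)).1 (by simpa only [hQ] using P.unit) }⟩
  · rintro ⟨S⟩
    let Q (X : C) : ExactPairing Xᘁ X := ⟨S.coev' X, S.ev' X, S.zigzag₁ X, S.zigzag₂ X⟩
    exact ⟨{
      i X := doubleDualIso (Q X)
      naturality f := (doubleDualIso_naturality_iff (Q _) (Q _) f).2 (S.mate_eq f)
      monoidal X Y := (doubleDualIso_tensor_iff (Q X) (Q Y) (Q _)).2 (S.mon_eq X Y)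
      unit := (doubleDualIso_unit_iff (Q _)).2 S.unit_eq }⟩
end

section
/- Let H be a quasi-Hopf algebra with reassociator Φ, antipode S and distinguished elements α, β. Define γ = S(x¹X²)α x²X³₁ ⊗ S(X¹)α x³X³₂. Then γ also equals S(X²x¹₂)α X³x² ⊗ S(X¹x¹₁)α x³, where Φ = X¹⊗X²⊗X³ and Φ⁻¹ = x¹⊗x²⊗x³ (summation understood). -/
open TensorProduct BigOperators

/-- A quasi-bialgebra (Drinfeld), with reassociator `Φ` presented as an explicit finite
sum of pure tensors `∑ i, X1 i ⊗ X2 i ⊗ X3 i`, and `Φ⁻¹ = ∑ j, x1 j ⊗ x2 j ⊗ x3 j`. -/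
structure QuasiBialgebra (k H : Type*) [Field k] [Ring H] [Algebra k H]
    (ι κ : Type*) [Fintype ι] [Fintype κ] where
  Δ : H →ₐ[k] H ⊗[k] H
  ε : H →ₐ[k] k
  X1 : ι → H
  X2 : ι → H
  X3 : ι → H
  x1 : κ → H
  x2 : κ → H
  x3 : κ → H
  Φ_inv_right :
    (∑ i, X1 i ⊗ₜ[k] (X2 i ⊗ₜ[k] X3 i)) * (∑ j, x1 j ⊗ₜ[k] (x2 j ⊗ₜ[k] x3 j)) = 1
  Φ_inv_left :
    (∑ j, x1 j ⊗ₜ[k] (x2 j ⊗ₜ[k] x3 j)) * (∑ i, X1 i ⊗ₜ[k] (X2 i ⊗ₜ[k] X3 i)) = 1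
  quasi_coassoc : ∀ h : H,
    (Algebra.TensorProduct.map (AlgHom.id k H) Δ) (Δ h)
        * (∑ i, X1 i ⊗ₜ[k] (X2 i ⊗ₜ[k] X3 i)) =
      (∑ i, X1 i ⊗ₜ[k] (X2 i ⊗ₜ[k] X3 i))
        * (Algebra.TensorProduct.assoc k k k H H H)
            ((Algebra.TensorProduct.map Δ (AlgHom.id k H)) (Δ h))
  counit_right : ∀ h : H,
    (TensorProduct.rid k H) (TensorProduct.map LinearMap.id ε.toLinearMap (Δ h)) = h
  counit_left : ∀ h : H,
    (TensorProduct.lid k H) (TensorProduct.map ε.toLinearMap LinearMap.id (Δ h)) = h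
  cocycle :
    ((∑ i, (1 : H) ⊗ₜ[k] (X1 i ⊗ₜ[k] (X2 i ⊗ₜ[k] X3 i)))
        * (∑ i, X1 i ⊗ₜ[k] ((Algebra.TensorProduct.assoc k k k H H H) (Δ (X2 i) ⊗ₜ[k] X3 i)))
        * (∑ i, X1 i ⊗ₜ[k] (X2 i ⊗ₜ[k] (X3 i ⊗ₜ[k] (1 : H)))))
      = (∑ i, X1 i ⊗ₜ[k] (X2 i ⊗ₜ[k] Δ (X3 i)))
        * (∑ i, (Algebra.TensorProduct.assoc k k k H H (H ⊗[k] H))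
            (Δ (X1 i) ⊗ₜ[k] (X2 i ⊗ₜ[k] X3 i)))
  counit_Φ : (∑ i, ε (X2 i) • (X1 i ⊗ₜ[k] X3 i)) = 1

/-- A quasi-Hopf algebra: a quasi-bialgebra with an anti-algebra map `S` and
distinguished elements `α`, `β` satisfying Drinfeld's antipode axioms. -/
structure QuasiHopf (k H : Type*) [Field k] [Ring H] [Algebra k H]
    (ι κ : Type*) [Fintype ι] [Fintype κ] extends QuasiBialgebra k H ι κ where
  S : H →ₗ[k] H
  S_mul : ∀ a b : H, S (a * b) = S b * S a
  S_one : S 1 = 1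
  α : H
  β : H
  antipode_left : ∀ h : H,
    LinearMap.mul' k H
      (TensorProduct.map ((LinearMap.mulRight k α).comp S) LinearMap.id (Δ h)) = ε h • α
  antipode_right : ∀ h : H,
    LinearMap.mul' k H
      (TensorProduct.map (LinearMap.mulRight k β) S (Δ h)) = ε h • β
  antipode_Φ : ∑ i, X1 i * β * S (X2 i) * α * X3 i = 1
  antipode_Φinv : ∑ j, S (x1 j) * α * x2 j * β * S (x3 j) = 1

/-- A quasitriangular quasi-Hopf algebra: `R = ∑ a, r1 a ⊗ r2 a`,
`R⁻¹ = ∑ b, ri1 b ⊗ ri2 b`, with the quasitriangularity axioms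
`(Δ ⊗ id)(R) = Φ₂₃₁ R₁₃ Φ₁₃₂⁻¹ R₂₃ Φ`, `(id ⊗ Δ)(R) = Φ₂₃₁⁻¹ R₁₃ Φ₂₁₃ R₁₂ Φ⁻¹`
and `Δᶜᵒᵖ(h) R = R Δ(h)`, all written out on pure tensors. -/
structure QuasiTriangular (k H : Type*) [Field k] [Ring H] [Algebra k H]
    (ι κ ρ σ : Type*) [Fintype ι] [Fintype κ] [Fintype ρ] [Fintype σ]
    extends QuasiHopf k H ι κ where
  r1 : ρ → H
  r2 : ρ → H
  ri1 : σ → H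
  ri2 : σ → H
  R_inv_right : (∑ a, r1 a ⊗ₜ[k] r2 a) * (∑ b, ri1 b ⊗ₜ[k] ri2 b) = 1
  R_inv_left : (∑ b, ri1 b ⊗ₜ[k] ri2 b) * (∑ a, r1 a ⊗ₜ[k] r2 a) = 1
  qt1 : (∑ a, (Algebra.TensorProduct.assoc k k k H H H) (Δ (r1 a) ⊗ₜ[k] r2 a))
      = (∑ i, X2 i ⊗ₜ[k] (X3 i ⊗ₜ[k] X1 i))
        * (∑ a, r1 a ⊗ₜ[k] ((1 : H) ⊗ₜ[k] r2 a))
        * (∑ j, x1 j ⊗ₜ[k] (x3 j ⊗ₜ[k] x2 j))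
        * (∑ a, (1 : H) ⊗ₜ[k] (r1 a ⊗ₜ[k] r2 a))
        * (∑ i, X1 i ⊗ₜ[k] (X2 i ⊗ₜ[k] X3 i))
  qt2 : (∑ a, r1 a ⊗ₜ[k] Δ (r2 a))
      = (∑ j, x3 j ⊗ₜ[k] (x1 j ⊗ₜ[k] x2 j))
        * (∑ a, r1 a ⊗ₜ[k] ((1 : H) ⊗ₜ[k] r2 a))
        * (∑ i, X2 i ⊗ₜ[k] (X1 i ⊗ₜ[k] X3 i))
        * (∑ a, r1 a ⊗ₜ[k] (r2 a ⊗ₜ[k] (1 : H)))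
        * (∑ j, x1 j ⊗ₜ[k] (x2 j ⊗ₜ[k] x3 j))
  qt3 : ∀ h : H,
    (TensorProduct.comm k H H) (Δ h) * (∑ a, r1 a ⊗ₜ[k] r2 a)
      = (∑ a, r1 a ⊗ₜ[k] r2 a) * Δ h

/-- The Drinfeld element `u = S(R² x² β S(x³)) α R¹ x¹` of a quasitriangular
quasi-Hopf algebra. -/
noncomputable def QuasiTriangular.u {k H : Type*} [Field k] [Ring H] [Algebra k H]
    {ι κ ρ σ : Type*} [Fintype ι] [Fintype κ] [Fintype ρ] [Fintype σ]
    (Q : QuasiTriangular k H ι κ ρ σ) : H :=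
  ∑ a, ∑ j, Q.S (Q.r2 a * Q.x2 j * Q.β * Q.S (Q.x3 j)) * Q.α * (Q.r1 a * Q.x1 j)

/-!
Apply `gammaMap : a ⊗ b ⊗ c ⊗ d ↦ S(b)αc ⊗ S(a)αd` to the 3-cocycle identity in the form
`Φ₂₃₄⁻¹ · (id ⊗ id ⊗ Δ)(Φ) = (id ⊗ Δ ⊗ id)(Φ) · Φ₁₂₃ · (Δ ⊗ id ⊗ id)(Φ⁻¹)`.
The left side maps to the first expression of `γ` and `Φ₁₂₃ · (Δ ⊗ id ⊗ id)(Φ⁻¹)` to the second.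
The factor `(id ⊗ Δ ⊗ id)(Φ)` disappears under `gammaMap`: by `S(h₁)αh₂ = ε(h)α` it contributes
`(id ⊗ ε ⊗ id)(Φ) = 1`.
-/

lemma mul_eq_mul_mul_of_mul_mul_eq_mul {M : Type*} [Monoid M] {a a' b c d e e' : M}
    (h : a * b * c = d * e) (ha : a' * a = 1) (he : e * e' = 1) : a' * d = b * (c * e') :=
  calc a' * d = a' * (d * e) * e' := by rw [mul_assoc, mul_assoc, he, mul_one]
    _ = a' * a * b * (c * e') := by rw [← h]; simp only [mul_assoc]
    _ = b * (c * e') := by rw [ha, one_mul]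

namespace QuasiBialgebra

variable {k H : Type*} [Field k] [Ring H] [Algebra k H] {ι κ : Type*} [Fintype ι] [Fintype κ]
  (Q : QuasiBialgebra k H ι κ)

lemma one_tmul_Φinv_mul_one_tmul_Φ :
    (∑ j, (1 : H) ⊗ₜ[k] (Q.x1 j ⊗ₜ[k] (Q.x2 j ⊗ₜ[k] Q.x3 j)))
      * (∑ i, (1 : H) ⊗ₜ[k] (Q.X1 i ⊗ₜ[k] (Q.X2 i ⊗ₜ[k] Q.X3 i))) = 1 := by
  have h := congrArg (Algebra.TensorProduct.includeRight (R := k) (A := H)) Q.Φ_inv_left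
  rw [map_mul, map_one, map_sum, map_sum] at h
  exact h

lemma comul_tmul_Φ_mul_comul_tmul_Φinv :
    (∑ i, Algebra.TensorProduct.assoc k k k H H (H ⊗[k] H)
        (Q.Δ (Q.X1 i) ⊗ₜ[k] (Q.X2 i ⊗ₜ[k] Q.X3 i)))
      * (∑ j, Algebra.TensorProduct.assoc k k k H H (H ⊗[k] H)
          (Q.Δ (Q.x1 j) ⊗ₜ[k] (Q.x2 j ⊗ₜ[k] Q.x3 j))) = 1 := by
  have h := congrArg ((Algebra.TensorProduct.assoc k k k H H (H ⊗[k] H)).toAlgHom.comp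
    (Algebra.TensorProduct.map Q.Δ (AlgHom.id k (H ⊗[k] H)))) Q.Φ_inv_right
  simp only [map_mul, map_one, map_sum] at h
  exact h

lemma cocycle_inv_mul :
    (∑ j, (1 : H) ⊗ₜ[k] (Q.x1 j ⊗ₜ[k] (Q.x2 j ⊗ₜ[k] Q.x3 j)))
        * (∑ i, Q.X1 i ⊗ₜ[k] (Q.X2 i ⊗ₜ[k] Q.Δ (Q.X3 i)))
      = (∑ i, Q.X1 i ⊗ₜ[k] Algebra.TensorProduct.assoc k k k H H H (Q.Δ (Q.X2 i) ⊗ₜ[k] Q.X3 i))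
          * ((∑ i, Q.X1 i ⊗ₜ[k] (Q.X2 i ⊗ₜ[k] (Q.X3 i ⊗ₜ[k] (1 : H))))
            * ∑ j, Algebra.TensorProduct.assoc k k k H H (H ⊗[k] H)
                (Q.Δ (Q.x1 j) ⊗ₜ[k] (Q.x2 j ⊗ₜ[k] Q.x3 j))) :=
  mul_eq_mul_mul_of_mul_mul_eq_mul Q.cocycle Q.one_tmul_Φinv_mul_one_tmul_Φ
    Q.comul_tmul_Φ_mul_comul_tmul_Φinv

end QuasiBialgebra

namespace QuasiHopf

variable {k H : Type*} [Field k] [Ring H] [Algebra k H]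

noncomputable def shuffle : H ⊗[k] (H ⊗[k] (H ⊗[k] H)) ≃ₐ[k] (H ⊗[k] H) ⊗[k] (H ⊗[k] H) :=
  (Algebra.TensorProduct.leftComm k H H (H ⊗[k] H)).trans <|
    (Algebra.TensorProduct.congr .refl (Algebra.TensorProduct.leftComm k H H H)).trans <|
      (Algebra.TensorProduct.assoc k k k H H (H ⊗[k] H)).symm

@[simp]
lemma shuffle_tmul (a b c d : H) :
    shuffle (k := k) (a ⊗ₜ[k] (b ⊗ₜ[k] (c ⊗ₜ[k] d))) = (b ⊗ₜ[k] c) ⊗ₜ[k] (a ⊗ₜ[k] d) := rfl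

lemma shuffle_tmul_assoc_tmul (a c : H) (t : H ⊗[k] H) :
    shuffle (a ⊗ₜ[k] Algebra.TensorProduct.assoc k k k H H H (t ⊗ₜ[k] c))
      = t ⊗ₜ[k] (a ⊗ₜ[k] c) := by
  induction t using TensorProduct.induction_on with
  | zero => simp
  | tmul p q => simp
  | add t u ht hu => simp only [add_tmul, map_add, tmul_add, ht, hu]

section Contraction

variable (S : H →ₗ[k] H) (α : H)

noncomputable def contraction : H ⊗[k] H →ₗ[k] H :=
  LinearMap.mul' k H ∘ₗ TensorProduct.map (LinearMap.mulRight k α ∘ₗ S) LinearMap.id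

@[simp]
lemma contraction_tmul (x y : H) : contraction S α (x ⊗ₜ[k] y) = S x * α * y := rfl

lemma contraction_mul_tmul (hS : ∀ a b : H, S (a * b) = S b * S a) (v : H ⊗[k] H) (x y : H) :
    contraction S α (v * (x ⊗ₜ[k] y)) = S x * contraction S α v * y := by
  induction v using TensorProduct.induction_on with
  | zero => simp
  | tmul p q => simp [hS, mul_assoc]
  | add v w hv hw => simp only [add_mul, map_add, hv, hw, mul_add]

noncomputable def gammaMap : H ⊗[k] (H ⊗[k] (H ⊗[k] H)) →ₗ[k] H ⊗[k] H :=
  TensorProduct.map (contraction S α) (contraction S α) ∘ₗ shuffle.toLinearMap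

@[simp]
lemma gammaMap_tmul (a b c d : H) :
    gammaMap S α (a ⊗ₜ[k] (b ⊗ₜ[k] (c ⊗ₜ[k] d))) = (S b * α * c) ⊗ₜ[k] (S a * α * d) := rfl

/- Ring lemmas such as `mul_add` do not fire on the fourfold tensor product (instance
synthesis fails there), so products are computed after `shuffle`. -/
lemma gammaMap_mul (u v : H ⊗[k] (H ⊗[k] (H ⊗[k] H))) :
    gammaMap S α (u * v)
      = TensorProduct.map (contraction S α) (contraction S α) (shuffle u * shuffle v) := by
  simp only [gammaMap, LinearMap.comp_apply, AlgEquiv.toLinearMap_apply, map_mul]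

lemma gammaMap_sum_mul_sum {ι κ : Type*} (s : Finset ι) (t : Finset κ)
    (f : ι → H ⊗[k] (H ⊗[k] (H ⊗[k] H))) (g : κ → H ⊗[k] (H ⊗[k] (H ⊗[k] H))) :
    gammaMap S α ((∑ i ∈ s, f i) * ∑ j ∈ t, g j) = ∑ i ∈ s, ∑ j ∈ t, gammaMap S α (f i * g j) := by
  rw [gammaMap_mul, map_sum, map_sum, Finset.sum_mul, map_sum]
  simp only [Finset.mul_sum, map_sum, gammaMap_mul]

lemma gammaMap_tmul_tmul (a b : H) (w : H ⊗[k] H) :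
    gammaMap S α (a ⊗ₜ[k] (b ⊗ₜ[k] w)) = ((S b * α) ⊗ₜ[k] (S a * α)) * w := by
  induction w using TensorProduct.induction_on with
  | zero => simp
  | tmul c d => simp [mul_assoc]
  | add w w' hw hw' => simp only [tmul_add, map_add, hw, hw', mul_add]

lemma gammaMap_one_tmul_mul_tmul (a b c d e : H) (w : H ⊗[k] H) :
    gammaMap S α (((1 : H) ⊗ₜ[k] (a ⊗ₜ[k] (b ⊗ₜ[k] c))) * (d ⊗ₜ[k] (e ⊗ₜ[k] w)))
      = ((S (a * e) * α * b) ⊗ₜ[k] (S d * α * c)) * w := by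
  rw [Algebra.TensorProduct.tmul_mul_tmul, Algebra.TensorProduct.tmul_mul_tmul, one_mul,
    gammaMap_tmul_tmul, ← mul_assoc, Algebra.TensorProduct.tmul_mul_tmul]

lemma gammaMap_tmul_one_mul_assoc (hS : ∀ a b : H, S (a * b) = S b * S a)
    (a b c p q : H) (t : H ⊗[k] H) :
    gammaMap S α ((a ⊗ₜ[k] (b ⊗ₜ[k] (c ⊗ₜ[k] (1 : H))))
        * Algebra.TensorProduct.assoc k k k H H (H ⊗[k] H) (t ⊗ₜ[k] (p ⊗ₜ[k] q)))
      = TensorProduct.map S S ((b ⊗ₜ[k] a) * TensorProduct.comm k H H t)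
          * ((α * c * p) ⊗ₜ[k] (α * q)) := by
  rw [gammaMap_mul]
  induction t using TensorProduct.induction_on with
  | zero => simp
  | tmul x y => simp [hS, mul_assoc]
  | add t u ht hu => simp only [add_tmul, map_add, mul_add, ht, hu, add_mul]

end Contraction

variable {ι κ : Type*} [Fintype ι] [Fintype κ] (Q : QuasiHopf k H ι κ)

lemma contraction_comul (h : H) : contraction Q.S Q.α (Q.Δ h) = Q.ε h • Q.α :=
  Q.antipode_left h

lemma contraction_comul_mul (h : H) (w : H ⊗[k] H) :
    contraction Q.S Q.α (Q.Δ h * w) = Q.ε h • contraction Q.S Q.α w := by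
  induction w using TensorProduct.induction_on with
  | zero => simp
  | tmul x y => simp [contraction_mul_tmul _ _ Q.S_mul, contraction_comul, mul_assoc]
  | add w w' hw hw' => simp only [mul_add, map_add, hw, hw', smul_add]

lemma map_contraction_comul_tmul_mul (h : H) (v : H ⊗[k] H) (V : (H ⊗[k] H) ⊗[k] (H ⊗[k] H)) :
    TensorProduct.map (contraction Q.S Q.α) (contraction Q.S Q.α) ((Q.Δ h ⊗ₜ[k] v) * V)
      = Q.ε h • TensorProduct.map (contraction Q.S Q.α) (contraction Q.S Q.α)
          (((1 : H ⊗[k] H) ⊗ₜ[k] v) * V) := by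
  induction V using TensorProduct.induction_on with
  | zero => simp
  | tmul w w' => simp [contraction_comul_mul, smul_tmul']
  | add V V' hV hV' => simp only [mul_add, map_add, hV, hV', smul_add]

lemma gammaMap_comul_middle_mul (u : H ⊗[k] (H ⊗[k] (H ⊗[k] H))) :
    gammaMap Q.S Q.α ((∑ i, Q.X1 i ⊗ₜ[k]
        Algebra.TensorProduct.assoc k k k H H H (Q.Δ (Q.X2 i) ⊗ₜ[k] Q.X3 i)) * u)
      = gammaMap Q.S Q.α u := by
  have hshuffle : shuffle (∑ i, Q.X1 i ⊗ₜ[k]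
      Algebra.TensorProduct.assoc k k k H H H (Q.Δ (Q.X2 i) ⊗ₜ[k] Q.X3 i))
        = ∑ i, Q.Δ (Q.X2 i) ⊗ₜ[k] (Q.X1 i ⊗ₜ[k] Q.X3 i) := by
    simp only [map_sum, shuffle_tmul_assoc_tmul]
  have hcounit : ∑ i, Q.ε (Q.X2 i) • ((1 : H ⊗[k] H) ⊗ₜ[k] (Q.X1 i ⊗ₜ[k] Q.X3 i)) = 1 := by
    have h := congrArg (TensorProduct.mk k (H ⊗[k] H) (H ⊗[k] H) 1) Q.counit_Φ
    simpa only [map_sum, map_smul, mk_apply, ← Algebra.TensorProduct.one_def] using h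
  calc _ = TensorProduct.map (contraction Q.S Q.α) (contraction Q.S Q.α)
        ((∑ i, Q.Δ (Q.X2 i) ⊗ₜ[k] (Q.X1 i ⊗ₜ[k] Q.X3 i)) * shuffle u) := by
        rw [gammaMap_mul, hshuffle]
    _ = TensorProduct.map (contraction Q.S Q.α) (contraction Q.S Q.α)
        ((∑ i, Q.ε (Q.X2 i) • ((1 : H ⊗[k] H) ⊗ₜ[k] (Q.X1 i ⊗ₜ[k] Q.X3 i))) * shuffle u) := by
        simp only [Finset.sum_mul, map_sum, map_contraction_comul_tmul_mul, smul_mul_assoc,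
          map_smul]
    _ = gammaMap Q.S Q.α u := by
        rw [hcounit, one_mul]
        rfl

end QuasiHopf

/-- In a quasi-Hopf algebra, the element
`γ = S(x¹X²) α x² X³₁ ⊗ S(X¹) α x³ X³₂` also equals
`S(X² x¹₂) α X³ x² ⊗ S(X¹ x¹₁) α x³`. -/
theorem gamma_two_expressions
    {k H : Type*} [Field k] [Ring H] [Algebra k H]
    {ι κ : Type*} [Fintype ι] [Fintype κ]
    (Q : QuasiHopf k H ι κ) :
    (∑ j, ∑ i,
      ((Q.S (Q.x1 j * Q.X2 i) * Q.α * Q.x2 j) ⊗ₜ[k] (Q.S (Q.X1 i) * Q.α * Q.x3 j))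
        * Q.Δ (Q.X3 i))
    = (∑ i, ∑ j,
        (TensorProduct.map Q.S Q.S
            ((Q.X2 i ⊗ₜ[k] Q.X1 i) * (TensorProduct.comm k H H) (Q.Δ (Q.x1 j))))
          * ((Q.α * Q.X3 i * Q.x2 j) ⊗ₜ[k] (Q.α * Q.x3 j))) := by
  open QuasiHopf in
  calc _ = gammaMap Q.S Q.α ((∑ j, (1 : H) ⊗ₜ[k] (Q.x1 j ⊗ₜ[k] (Q.x2 j ⊗ₜ[k] Q.x3 j)))
          * ∑ i, Q.X1 i ⊗ₜ[k] (Q.X2 i ⊗ₜ[k] Q.Δ (Q.X3 i))) := by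
        simp only [gammaMap_sum_mul_sum, gammaMap_one_tmul_mul_tmul]
    _ = gammaMap Q.S Q.α
          ((∑ i, Q.X1 i ⊗ₜ[k] Algebra.TensorProduct.assoc k k k H H H (Q.Δ (Q.X2 i) ⊗ₜ[k] Q.X3 i))
            * ((∑ i, Q.X1 i ⊗ₜ[k] (Q.X2 i ⊗ₜ[k] (Q.X3 i ⊗ₜ[k] (1 : H))))
              * ∑ j, Algebra.TensorProduct.assoc k k k H H (H ⊗[k] H)
                  (Q.Δ (Q.x1 j) ⊗ₜ[k] (Q.x2 j ⊗ₜ[k] Q.x3 j)))) := by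
        rw [Q.cocycle_inv_mul]
    _ = gammaMap Q.S Q.α ((∑ i, Q.X1 i ⊗ₜ[k] (Q.X2 i ⊗ₜ[k] (Q.X3 i ⊗ₜ[k] (1 : H))))
          * ∑ j, Algebra.TensorProduct.assoc k k k H H (H ⊗[k] H)
              (Q.Δ (Q.x1 j) ⊗ₜ[k] (Q.x2 j ⊗ₜ[k] Q.x3 j))) := Q.gammaMap_comul_middle_mul _
    _ = _ := by simp only [gammaMap_sum_mul_sum, gammaMap_tmul_one_mul_assoc _ _ Q.S_mul]
end

section
/- If (H, g) is a sovereign quasi-Hopf algebra, then g⁻¹ = S(g). -/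
open TensorProduct BigOperators

/-- If `(H, 𝔤)` is a sovereign quasi-Hopf algebra, i.e. `𝔤` is
invertible with `S²(h) = 𝔤⁻¹ h 𝔤` and `Δ(𝔤) = (𝔤 ⊗ 𝔤)(S⊗S)(f₂₁⁻¹) f` for the
Drinfeld twist `f`, then `𝔤⁻¹ = S(𝔤)`. -/
theorem sovereign_inv_eq_S
    {k H : Type*} [Field k] [Ring H] [Algebra k H]
    {ι κ : Type*} [Fintype ι] [Fintype κ]
    (Q : QuasiHopf k H ι κ)
    (fT fTi : H ⊗[k] H)
    (hf_inv : fT * fTi = 1) (hf_inv' : fTi * fT = 1)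
    (hf_S : ∀ h : H, fT * Q.Δ (Q.S h) * fTi
      = TensorProduct.map Q.S Q.S ((TensorProduct.comm k H H) (Q.Δ h)))
    (hf_βα : LinearMap.mul' k H
      (TensorProduct.map (LinearMap.mulRight k Q.β) Q.S fT) = Q.S Q.α)
    (hf_αβ : LinearMap.mul' k H
      (TensorProduct.map ((LinearMap.mulRight k Q.α).comp Q.S) LinearMap.id fTi)
        = Q.S Q.β)
    (g gi : H) (hg : g * gi = 1) (hg' : gi * g = 1)
    (hS2 : ∀ h : H, Q.S (Q.S h) = gi * h * g)
    (hΔg : Q.Δ g = (g ⊗ₜ[k] g)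
      * TensorProduct.map Q.S Q.S ((TensorProduct.comm k H H) fTi) * fT) :
    gi = Q.S g := by
  obtain ⟨F, hF⟩ := TensorProduct.exists_finset fT
  obtain ⟨G, hG⟩ := TensorProduct.exists_finset fTi
  -- inverses under S
  have hSgiSg : Q.S gi * Q.S g = 1 := by rw [← Q.S_mul, hg, Q.S_one]
  have hSgSgi : Q.S g * Q.S gi = 1 := by rw [← Q.S_mul, hg', Q.S_one]
  -- concrete forms of the twist identities
  have hβα : (∑ p ∈ F, p.1 * Q.β * Q.S p.2) = Q.S Q.α := by
    rw [← hf_βα, hF]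
    simp [LinearMap.mul'_apply, map_sum, mul_assoc]
  have hαβ : (∑ q ∈ G, Q.S q.1 * Q.α * q.2) = Q.S Q.β := by
    rw [← hf_αβ, hG]
    simp [LinearMap.mul'_apply, map_sum, mul_assoc]
  -- (S⊗S)(comm fTi) * (S⊗S)(comm fT) = 1
  have hUU' : TensorProduct.map Q.S Q.S ((TensorProduct.comm k H H) fTi)
      * TensorProduct.map Q.S Q.S ((TensorProduct.comm k H H) fT) = 1 := by
    have h1 := congrArg (fun x => TensorProduct.map Q.S Q.S ((TensorProduct.comm k H H) x)) hf_inv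
    simp only [hF, hG] at h1 ⊢
    simp only [Finset.sum_mul, Finset.mul_sum, Algebra.TensorProduct.tmul_mul_tmul,
      map_sum, TensorProduct.comm_tmul, TensorProduct.map_tmul,
      Algebra.TensorProduct.one_def, Q.S_mul, Q.S_one] at h1 ⊢
    rw [Finset.sum_comm]
    exact h1
  -- Δ gi
  have hΔgi : Q.Δ gi = fTi * TensorProduct.map Q.S Q.S ((TensorProduct.comm k H H) fT)
      * (gi ⊗ₜ[k] gi) := by
    have hgg : (g ⊗ₜ[k] g : H ⊗[k] H) * (gi ⊗ₜ[k] gi) = 1 := by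
      rw [Algebra.TensorProduct.tmul_mul_tmul, hg, Algebra.TensorProduct.one_def]
    have h1 : Q.Δ g * (fTi * TensorProduct.map Q.S Q.S ((TensorProduct.comm k H H) fT)
        * (gi ⊗ₜ[k] gi)) = 1 := by
      rw [hΔg]
      simp only [mul_assoc]
      rw [← mul_assoc fT fTi, hf_inv, one_mul,
        ← mul_assoc (TensorProduct.map Q.S Q.S ((TensorProduct.comm k H H) fTi)), hUU',
        one_mul, hgg]
    have h2 : Q.Δ gi * Q.Δ g = 1 := by rw [← map_mul, hg', map_one]
    calc Q.Δ gi = Q.Δ gi * (Q.Δ g * (fTi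
          * TensorProduct.map Q.S Q.S ((TensorProduct.comm k H H) fT) * (gi ⊗ₜ[k] gi))) := by
          rw [h1, mul_one]
      _ = (Q.Δ gi * Q.Δ g) * (fTi
          * TensorProduct.map Q.S Q.S ((TensorProduct.comm k H H) fT) * (gi ⊗ₜ[k] gi)) := by
          simp only [mul_assoc]
      _ = _ := by rw [h2, one_mul]
  -- Step A: apply the left antipode axiom to gi
  have h1 := Q.antipode_left gi
  rw [hΔgi, hF, hG] at h1
  simp only [Finset.sum_mul, Finset.mul_sum, Algebra.TensorProduct.tmul_mul_tmul, map_sum,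
    TensorProduct.comm_tmul, TensorProduct.map_tmul, LinearMap.mul'_apply,
    LinearMap.comp_apply, LinearMap.mulRight_apply, LinearMap.id_coe, id_eq] at h1
  have e1 : (∑ p ∈ F, ∑ q ∈ G, Q.S (q.1 * Q.S p.2 * gi) * Q.α * (q.2 * Q.S p.1 * gi))
      = Q.S gi * (∑ p ∈ F, Q.S (Q.S p.2)
        * ((∑ q ∈ G, Q.S q.1 * Q.α * q.2) * (Q.S p.1 * gi))) := by
    simp only [Q.S_mul, Finset.mul_sum, Finset.sum_mul, mul_assoc]
  rw [e1, hαβ] at h1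
  have e2 : Q.S gi * (∑ p ∈ F, Q.S (Q.S p.2) * (Q.S Q.β * (Q.S p.1 * gi)))
      = Q.S gi * (Q.S (∑ p ∈ F, p.1 * Q.β * Q.S p.2) * gi) := by
    simp only [map_sum, Q.S_mul, Finset.sum_mul, Finset.mul_sum, mul_assoc]
  rw [e2, hβα, hS2] at h1
  -- h1 : S gi * (gi * α * g * gi) = ε gi • α
  simp only [mul_assoc, hg, mul_one] at h1
  -- h1 : S gi * (gi * α) = ε gi • α
  have hεggi : Q.ε g * Q.ε gi = 1 := by rw [← map_mul, hg, map_one]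
  have hcα : g * Q.S g * Q.α = Q.ε g • Q.α := by
    have h2 : g * Q.S g * (Q.S gi * (gi * Q.α)) = Q.α := by
      simp only [mul_assoc]
      rw [← mul_assoc (Q.S g) (Q.S gi), hSgSgi, one_mul, ← mul_assoc g gi, hg, one_mul]
    rw [h1] at h2
    have h3 : Q.ε g • (g * Q.S g * (Q.ε gi • Q.α)) = g * Q.S g * Q.α := by
      rw [mul_smul_comm, smul_smul, hεggi, one_smul]
    rw [← h3, h2]
  -- Step B: g * S g commutes with everything in the image of S
  have hcS : ∀ h : H, g * Q.S g * Q.S h = Q.S h * (g * Q.S g) := by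
    intro h
    have key : Q.S g * (Q.S h * Q.S gi) = gi * Q.S h * g := by
      have h4 := congrArg Q.S (hS2 h)
      rw [hS2 (Q.S h)] at h4
      simp only [Q.S_mul] at h4
      exact h4.symm
    calc g * Q.S g * Q.S h
        = g * (Q.S g * (Q.S h * (Q.S gi * Q.S g))) := by
          rw [hSgiSg, mul_one, mul_assoc]
      _ = g * ((Q.S g * (Q.S h * Q.S gi)) * Q.S g) := by simp only [mul_assoc]
      _ = g * ((gi * Q.S h * g) * Q.S g) := by rw [key]
      _ = (g * gi) * (Q.S h * (g * Q.S g)) := by simp only [mul_assoc]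
      _ = Q.S h * (g * Q.S g) := by rw [hg, one_mul]
  -- Step C: g * S g = ε g • 1
  have hc1 : g * Q.S g = Q.ε g • (1 : H) := by
    have h5 := Q.antipode_Φinv
    calc g * Q.S g
        = g * Q.S g * (∑ j, Q.S (Q.x1 j) * Q.α * Q.x2 j * Q.β * Q.S (Q.x3 j)) := by
          rw [h5, mul_one]
      _ = ∑ j, Q.ε g • (Q.S (Q.x1 j) * Q.α * Q.x2 j * Q.β * Q.S (Q.x3 j)) := by
          rw [Finset.mul_sum]
          refine Finset.sum_congr rfl fun j _ => ?_
          simp only [← mul_assoc]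
          rw [hcS (Q.x1 j), mul_assoc (Q.S (Q.x1 j)) (g * Q.S g) Q.α, hcα]
          simp only [mul_smul_comm, smul_mul_assoc]
      _ = Q.ε g • (1 : H) := by rw [← Finset.smul_sum, h5]
  -- ε α ≠ 0
  have hεα : Q.ε Q.α ≠ 0 := by
    intro h0
    have h6 := congrArg Q.ε Q.antipode_Φ
    simp only [map_sum, map_mul, map_one, h0, mul_zero, zero_mul,
      Finset.sum_const_zero] at h6
    exact one_ne_zero h6.symm
  -- ε ∘ S = ε
  have hεS : ∀ h : H, Q.ε (Q.S h) = Q.ε h := by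
    intro h
    have lin : ∀ T : H ⊗[k] H,
        Q.ε (LinearMap.mul' k H (TensorProduct.map
          ((LinearMap.mulRight k Q.α).comp Q.S) LinearMap.id T))
        = Q.ε Q.α * Q.ε (Q.S ((TensorProduct.rid k H)
            (TensorProduct.map LinearMap.id Q.ε.toLinearMap T))) := by
      intro T
      induction T using TensorProduct.induction_on with
      | zero => simp
      | tmul a b =>
          simp only [TensorProduct.map_tmul, LinearMap.mul'_apply, LinearMap.comp_apply,
            LinearMap.mulRight_apply, LinearMap.id_coe, id_eq, TensorProduct.rid_tmul,
            AlgHom.toLinearMap_apply, map_smul, map_mul, smul_eq_mul]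
          ring
      | add x y hx hy => simp only [map_add, hx, hy]; ring
    have h7 := lin (Q.Δ h)
    rw [Q.antipode_left h, Q.counit_right h, map_smul, smul_eq_mul] at h7
    apply mul_left_cancel₀ hεα
    rw [← h7]
    ring
  -- ε g = 1
  have hεg0 : Q.ε g ≠ 0 := fun h0 => by
    rw [h0, zero_mul] at hεggi
    exact one_ne_zero hεggi.symm
  have hεg1 : Q.ε g = 1 := by
    have h8 := congrArg Q.ε hc1
    rw [map_mul, hεS g, map_smul, map_one, smul_eq_mul, mul_one] at h8
    exact mul_left_cancel₀ hεg0 (by rw [h8, mul_one])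
  have hc2 : g * Q.S g = 1 := by rw [hc1, hεg1, one_smul]
  calc gi = gi * (g * Q.S g) := by rw [hc2, mul_one]
    _ = (gi * g) * Q.S g := by rw [mul_assoc]
    _ = Q.S g := by rw [hg', one_mul]
end

section
/- In an involutory quasi-Hopf algebra one has the identities x³α⁻¹S(x²)β⁻¹x¹ = 1 and S(X³)β⁻¹X²α⁻¹S(X¹) = 1, where Φ = X¹⊗X²⊗X³ and Φ⁻¹ = x¹⊗x²⊗x³. -/
open TensorProduct BigOperators

/-! Involutivity says that `S²` is the conjugation `h ↦ c h d` with `c = S(β) α`, `d = β S(α)`.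
Since `S(βα) = S(α) S(β)`, one has `d S(β) = β S(βα) = α⁻¹` and `S(α) c = S(βα) α = β⁻¹`, so
applying `S` to the antipode identities `X¹ β S(X²) α X³ = 1` and `S(x¹) α x² β S(x³) = 1`
gives `S(X³) β⁻¹ X² α⁻¹ S(X¹) = 1` and `c (x³ α⁻¹ S(x²) β⁻¹ x¹) d = 1`; finally
`d c = α⁻¹ α = 1` removes the conjugation. -/

theorem eq_one_of_mul_mul_eq_one {M : Type*} [Monoid M] {c d x : M} (hdc : d * c = 1)
    (h : c * x * d = 1) : x = 1 :=
  calc x = d * c * x * (d * c) := by rw [hdc, one_mul, mul_one]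
    _ = d * (c * x * d) * c := by simp only [mul_assoc]
    _ = 1 := by rw [h, mul_one, hdc]

namespace QuasiHopf

variable {k H : Type*} [Field k] [Ring H] [Algebra k H] {ι κ : Type*} [Fintype ι] [Fintype κ]
  (Q : QuasiHopf k H ι κ)

theorem S_S_mul_alpha_mul_mul_beta_mul_S
    (hinv : ∀ h : H, Q.S (Q.S h) = Q.S Q.β * Q.α * h * Q.β * Q.S Q.α) (a b c : H) :
    Q.S (Q.S a * Q.α * b * Q.β * Q.S c) =
      Q.S Q.β * Q.α
        * (c * (Q.β * Q.S (Q.β * Q.α)) * Q.S b * (Q.S (Q.β * Q.α) * Q.α) * a)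
        * (Q.β * Q.S Q.α) := by
  simp only [Q.S_mul, hinv, mul_assoc]

theorem S_mul_beta_mul_S_mul_alpha_mul
    (hinv : ∀ h : H, Q.S (Q.S h) = Q.S Q.β * Q.α * h * Q.β * Q.S Q.α) (a b c : H) :
    Q.S (a * Q.β * Q.S b * Q.α * c) =
      Q.S c * (Q.S (Q.β * Q.α) * Q.α) * b * (Q.β * Q.S (Q.β * Q.α)) * Q.S a := by
  simp only [Q.S_mul, hinv, mul_assoc]

theorem sum_x3_mul_S_x2_mul_x1_eq_one
    (hinv : ∀ h : H, Q.S (Q.S h) = Q.S Q.β * Q.α * h * Q.β * Q.S Q.α)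
    (hα : Q.β * Q.S (Q.β * Q.α) * Q.α = 1) :
    ∑ j, Q.x3 j * (Q.β * Q.S (Q.β * Q.α)) * Q.S (Q.x2 j) * (Q.S (Q.β * Q.α) * Q.α)
      * Q.x1 j = 1 := by
  refine eq_one_of_mul_mul_eq_one (c := Q.S Q.β * Q.α) (d := Q.β * Q.S Q.α) ?_ ?_
  · rw [Q.S_mul] at hα
    simpa only [mul_assoc] using hα
  · rw [Finset.mul_sum, Finset.sum_mul]
    simp_rw [← Q.S_S_mul_alpha_mul_mul_beta_mul_S hinv]
    rw [← map_sum, Q.antipode_Φinv, Q.S_one]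

theorem sum_S_X3_mul_X2_mul_S_X1_eq_one
    (hinv : ∀ h : H, Q.S (Q.S h) = Q.S Q.β * Q.α * h * Q.β * Q.S Q.α) :
    ∑ i, Q.S (Q.X3 i) * (Q.S (Q.β * Q.α) * Q.α) * Q.X2 i * (Q.β * Q.S (Q.β * Q.α))
      * Q.S (Q.X1 i) = 1 := by
  simp_rw [← Q.S_mul_beta_mul_S_mul_alpha_mul hinv]
  rw [← map_sum, Q.antipode_Φ, Q.S_one]

end QuasiHopf

theorem involutory_phi_identities_general
    {k H : Type*} [Field k] [Ring H] [Algebra k H]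
    {ι κ : Type*} [Fintype ι] [Fintype κ]
    (Q : QuasiHopf k H ι κ)
    (hinv : ∀ h : H, Q.S (Q.S h) = Q.S Q.β * Q.α * h * Q.β * Q.S Q.α)
    (αi βi : H)
    (hαi' : αi * Q.α = 1)
    (hαi_eq : Q.β * Q.S (Q.β * Q.α) = αi)
    (hβi_eq : Q.S (Q.β * Q.α) * Q.α = βi) :
    (∑ j, Q.x3 j * αi * Q.S (Q.x2 j) * βi * Q.x1 j = 1)
    ∧ (∑ i, Q.S (Q.X3 i) * βi * Q.X2 i * αi * Q.S (Q.X1 i) = 1) := by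
  subst hαi_eq hβi_eq
  exact ⟨Q.sum_x3_mul_S_x2_mul_x1_eq_one hinv hαi', Q.sum_S_X3_mul_X2_mul_S_X1_eq_one hinv⟩

/-- In an involutory quasi-Hopf algebra (where `α` and `β` are
invertible), one has `x³ α⁻¹ S(x²) β⁻¹ x¹ = 1` and `S(X³) β⁻¹ X² α⁻¹ S(X¹) = 1`. -/
theorem involutory_phi_identities
    {k H : Type*} [Field k] [Ring H] [Algebra k H]
    {ι κ : Type*} [Fintype ι] [Fintype κ]
    (Q : QuasiHopf k H ι κ)
    (hinv : ∀ h : H, Q.S (Q.S h) = Q.S Q.β * Q.α * h * Q.β * Q.S Q.α)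
    (αi βi : H)
    (hαi : Q.α * αi = 1) (hαi' : αi * Q.α = 1)
    (hβi : Q.β * βi = 1) (hβi' : βi * Q.β = 1)
    (hαi_eq : Q.β * Q.S (Q.β * Q.α) = αi)
    (hβi_eq : Q.S (Q.β * Q.α) * Q.α = βi)
    (hβi_coprod : ∀ h : H, LinearMap.mul' k H
      (TensorProduct.map ((LinearMap.mulRight k βi).comp Q.S) LinearMap.id
        ((TensorProduct.comm k H H) (Q.Δ h))) = Q.ε h • βi)
    (hαi_coprod : ∀ h : H, LinearMap.mul' k H
      (TensorProduct.map (LinearMap.mulRight k αi) Q.S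
        ((TensorProduct.comm k H H) (Q.Δ h))) = Q.ε h • αi) :
    (∑ j, Q.x3 j * αi * Q.S (Q.x2 j) * βi * Q.x1 j = 1)
    ∧ (∑ i, Q.S (Q.X3 i) * βi * Q.X2 i * αi * Q.S (Q.X1 i) = 1) :=
  involutory_phi_identities_general Q hinv αi βi hαi' hαi_eq hβi_eq
end

section
/- Let (H, R) be a quasitriangular quasi-Hopf algebra with Drinfeld element u = S(R²x²βS(x³))αR¹x¹. Then the central element uS(u) satisfies Δ(uS(u)) = (uS(u) ⊗ uS(u)) (R₂₁R)⁻². -/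
open TensorProduct BigOperators

/-!
`R₂₁R` commutes with the image of `Δ` (apply the flip to `Δᵒᵖ(h) R = R Δ(h)`), hence so does
its inverse. Multiplying the formulas for `Δ(u)` and `Δ(S(u))`, the inner `(R₂₁R)⁻¹` can thus be
moved to the left past `Δ(u)`, and the central element `uS(u) ⊗ uS(u)` to the far left; what is
left of the twists is `f⁻¹ (S ⊗ S)(f₂₁) (S ⊗ S)(f₂₁⁻¹) f = 1`, as `(S ⊗ S) ∘ flip` is an
anti-homomorphism.
-/

section

variable {R A B C D : Type*} [CommSemiring R] [Semiring A] [Semiring B] [Semiring C] [Semiring D]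
  [Algebra R A] [Algebra R B] [Algebra R C] [Algebra R D]

theorem TensorProduct.comm_mul (x y : A ⊗[R] B) :
    TensorProduct.comm R A B (x * y) = TensorProduct.comm R A B x * TensorProduct.comm R A B y :=
  map_mul (Algebra.TensorProduct.comm R A B) x y

theorem TensorProduct.map_mul_rev {f : A →ₗ[R] C} {g : B →ₗ[R] D}
    (hf : ∀ a a', f (a * a') = f a' * f a) (hg : ∀ b b', g (b * b') = g b' * g b)
    (x y : A ⊗[R] B) : map f g (x * y) = map f g y * map f g x := by
  induction x using TensorProduct.induction_on with
  | zero => simp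
  | tmul a b =>
    induction y using TensorProduct.induction_on with
    | zero => simp
    | tmul a' b' => simp [hf, hg]
    | add y y' hy hy' => simp only [mul_add, add_mul, map_add, hy, hy']
  | add x x' hx hx' => simp only [add_mul, mul_add, map_add, hx, hx']

theorem TensorProduct.commute_tmul {a : A} {b : B} (ha : ∀ a', Commute a a')
    (hb : ∀ b', Commute b b') (z : A ⊗[R] B) : Commute (a ⊗ₜ[R] b) z := by
  induction z using TensorProduct.induction_on with
  | zero => exact Commute.zero_right _
  | tmul a' b' => simp [Commute, SemiconjBy, (ha a').eq, (hb b').eq]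
  | add z z' hz hz' => exact hz.add_right hz'

theorem TensorProduct.commute_comm_mul_self {r x : A ⊗[R] A}
    (h : TensorProduct.comm R A A x * r = r * x) :
    Commute (TensorProduct.comm R A A r * r) x := by
  set τ := TensorProduct.comm R A A
  have h' : x * τ r = τ r * τ x := by
    simpa [τ, comm_mul] using congrArg τ h
  calc τ r * r * x = τ r * (τ x * r) := by rw [mul_assoc, h]
    _ = x * (τ r * r) := by rw [← mul_assoc, ← h', mul_assoc]

end

theorem coproduct_uSu_general
    {k H : Type*} [Field k] [Ring H] [Algebra k H]
    {ι κ ρ σ : Type*} [Fintype ι] [Fintype κ] [Fintype ρ] [Fintype σ]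
    (Q : QuasiTriangular k H ι κ ρ σ)
    (fT fTi : H ⊗[k] H)
    (hf_inv' : fTi * fT = 1)
    -- the inverse of `R₂₁R`
    (Tinv : H ⊗[k] H)
    (hT : ((TensorProduct.comm k H H) (∑ a, Q.r1 a ⊗ₜ[k] Q.r2 a)
        * (∑ a, Q.r1 a ⊗ₜ[k] Q.r2 a)) * Tinv = 1)
    (hT' : Tinv * ((TensorProduct.comm k H H) (∑ a, Q.r1 a ⊗ₜ[k] Q.r2 a)
        * (∑ a, Q.r1 a ⊗ₜ[k] Q.r2 a)) = 1)
    -- known properties of the Drinfeld element `u`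
    (hu_central : ∀ h : H, (Q.u * Q.S Q.u) * h = h * (Q.u * Q.S Q.u))
    (hΔu : Q.Δ Q.u
      = Tinv * fTi * TensorProduct.map Q.S Q.S ((TensorProduct.comm k H H) fT)
          * (Q.u ⊗ₜ[k] Q.u))
    (hΔSu : Q.Δ (Q.S Q.u)
      = Tinv * ((Q.S Q.u) ⊗ₜ[k] (Q.S Q.u))
          * TensorProduct.map Q.S Q.S ((TensorProduct.comm k H H) fTi) * fT) :
    Q.Δ (Q.u * Q.S Q.u)
      = ((Q.u * Q.S Q.u) ⊗ₜ[k] (Q.u * Q.S Q.u)) * (Tinv * Tinv) := by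
  set c := Q.u * Q.S Q.u
  set F : H ⊗[k] H → H ⊗[k] H := fun z => map Q.S Q.S (TensorProduct.comm k H H z)
  let T : (H ⊗[k] H)ˣ := ⟨_, Tinv, hT, hT'⟩
  have hTinv_comm : Commute Tinv (Q.Δ Q.u) :=
    Commute.units_inv_left (u := T) (commute_comm_mul_self (Q.qt3 Q.u))
  have hc_comm : ∀ z, Commute (c ⊗ₜ[k] c) z :=
    commute_tmul hu_central hu_central
  have hF : F fT * F fTi = 1 := by
    simp only [F]
    rw [← map_mul_rev Q.S_mul Q.S_mul, ← comm_mul, hf_inv', Algebra.TensorProduct.one_def,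
      comm_tmul, map_tmul, Q.S_one]
  calc Q.Δ c = Tinv * Q.Δ Q.u * (Q.S Q.u ⊗ₜ[k] Q.S Q.u) * F fTi * fT := by
        rw [map_mul, hΔSu]; simp only [F, mul_assoc]; exact (hTinv_comm.left_comm _).symm
    _ = Tinv * Tinv * fTi * F fT * (c ⊗ₜ[k] c) * F fTi * fT := by
        rw [hΔu]; simp only [F, c, ← Algebra.TensorProduct.tmul_mul_tmul, mul_assoc]
    _ = (c ⊗ₜ[k] c) * (Tinv * Tinv) * (fTi * (F fT * F fTi) * fT) := by
        simp only [mul_assoc, (hc_comm _).left_comm]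
    _ = (c ⊗ₜ[k] c) * (Tinv * Tinv) := by rw [hF, mul_one, hf_inv', mul_one]

/-- For a quasitriangular quasi-Hopf algebra with Drinfeld element
`u = S(R²x²βS(x³))αR¹x¹`, the central element `uS(u)` satisfies
`Δ(uS(u)) = (uS(u) ⊗ uS(u)) (R₂₁R)⁻²`. -/
theorem coproduct_uSu
    {k H : Type*} [Field k] [Ring H] [Algebra k H]
    {ι κ ρ σ : Type*} [Fintype ι] [Fintype κ] [Fintype ρ] [Fintype σ]
    (Q : QuasiTriangular k H ι κ ρ σ)
    (fT fTi : H ⊗[k] H)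
    (hf_inv : fT * fTi = 1) (hf_inv' : fTi * fT = 1)
    (hf_S : ∀ h : H, fT * Q.Δ (Q.S h) * fTi
      = TensorProduct.map Q.S Q.S ((TensorProduct.comm k H H) (Q.Δ h)))
    -- the inverse of `R₂₁R`
    (Tinv : H ⊗[k] H)
    (hT : ((TensorProduct.comm k H H) (∑ a, Q.r1 a ⊗ₜ[k] Q.r2 a)
        * (∑ a, Q.r1 a ⊗ₜ[k] Q.r2 a)) * Tinv = 1)
    (hT' : Tinv * ((TensorProduct.comm k H H) (∑ a, Q.r1 a ⊗ₜ[k] Q.r2 a)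
        * (∑ a, Q.r1 a ⊗ₜ[k] Q.r2 a)) = 1)
    -- known properties of the Drinfeld element `u`
    (hS2 : ∀ h : H, Q.S (Q.S h) * Q.u = Q.u * h)
    (hu_central : ∀ h : H, (Q.u * Q.S Q.u) * h = h * (Q.u * Q.S Q.u))
    (huSu : Q.u * Q.S Q.u = Q.S Q.u * Q.u)
    (hΔu : Q.Δ Q.u
      = Tinv * fTi * TensorProduct.map Q.S Q.S ((TensorProduct.comm k H H) fT)
          * (Q.u ⊗ₜ[k] Q.u))
    (hΔSu : Q.Δ (Q.S Q.u)
      = Tinv * ((Q.S Q.u) ⊗ₜ[k] (Q.S Q.u))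
          * TensorProduct.map Q.S Q.S ((TensorProduct.comm k H H) fTi) * fT) :
    Q.Δ (Q.u * Q.S Q.u)
      = ((Q.u * Q.S Q.u) ⊗ₜ[k] (Q.u * Q.S Q.u)) * (Tinv * Tinv) :=
  coproduct_uSu_general Q fT fTi hf_inv' Tinv hT hT' hu_central hΔu hΔSu
end
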